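/- Let n and k be positive integers with 1 ≤ k < 10n-1, and let r_i be the remainder of 10^i · k modulo 10n-1. Then the sequence of last decimal digits (r_i mod 10) for i = 1, 2, ... equals the sequence of decimal digits of the repeating expansion of k/(10n-1): for all i ≥ 1, r_i mod 10 = ⌊10^i · k/(10n-1)⌋ mod 10. -/

import Mathlib

/-- If `m ≡ -1 [MOD b]`, then writing `N = m * q + r` gives `N + q = r + (m + 1) * q`, so for
`b ∣ N` the remainder and the quotient agree modulo `b`. -/
theorem Nat.mod_mod_eq_div_mod_of_dvd_succ {b m N : ℕ} (hm : b ∣ m + 1) (hN : b ∣ N) :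
    N % m % b = N / m % b := by
  have hsplit : N % m + (m + 1) * (N / m) = N / m + N := by
    have := Nat.mod_add_div N m
    rw [add_mul, one_mul]
    omega
  have hq : N % m + (m + 1) * (N / m) ≡ N % m [MOD b] :=
    Nat.modEq_iff_dvd' (Nat.le_add_right _ _) |>.mpr (by simpa using hm.mul_right _) |>.symm
  have hN' : N / m + N ≡ N / m [MOD b] :=
    Nat.modEq_iff_dvd' (Nat.le_add_right _ _) |>.mpr (by simpa using hN) |>.symm
  exact hq.symm.trans (hsplit ▸ hN')

theorem stmt_8_general (n k : ℕ) (hn : 0 < n) (i : ℕ) (hi : 1 ≤ i) :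
    ((10 ^ i * k) % (10 * n - 1)) % 10 = ((10 ^ i * k) / (10 * n - 1)) % 10 := by
  refine Nat.mod_mod_eq_div_mod_of_dvd_succ ?_ (Dvd.dvd.mul_right (dvd_pow_self 10 (by omega)) k)
  exact ⟨n, by omega⟩

theorem stmt_8 (n k : ℕ) (hn : 0 < n) (hk : 1 ≤ k) (hk' : k < 10 * n - 1)
    (i : ℕ) (hi : 1 ≤ i) :
    ((10 ^ i * k) % (10 * n - 1)) % 10 = ((10 ^ i * k) / (10 * n - 1)) % 10 :=
  stmt_8_general n k hn i hi
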